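/- arXiv:2603.21595 — 3 statements merged into one kernel-verified Lean document; each statement's English description precedes it below -/
import Mathlib

section
/- Let H be a Hermitian d×d complex matrix, A a d×d complex matrix, and s ∈ ℝ. Let f : ℝ → ℂ be continuous and integrable, with Fourier transform f̂(ω) = ∫_ℝ f(t) e^{−iωt} dt satisfying |f̂(ω)| ≤ C e^{−γ|ω|} for some constants C > 0 and γ > |s|. Define f̃(t) = (1/2π) ∫_ℝ f̂(ω) e^{−ωs + iωt} dω, and assume f̃ is integrable and continuous. Then e^{sH} A_f e^{−sH} = A_{f̃}, and moreover ‖A_{f̃}‖ ≤ ‖A‖ · ∫_ℝ |f̃(t)| dt. -/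
open scoped Matrix.Norms.L2Operator ComplexOrder Classical
open MeasureTheory Real Matrix

/-- Matrix exponential. -/
noncomputable def mexp {d : ℕ} (M : Matrix (Fin d) (Fin d) ℂ) : Matrix (Fin d) (Fin d) ℂ :=
  NormedSpace.exp M

/-- The filtered operator `A_g = ∫ g(t) e^{iHt} A e^{-iHt} dt`. -/
noncomputable def filtered {d : ℕ} (H : Matrix (Fin d) (Fin d) ℂ) (g : ℝ → ℂ)
    (A : Matrix (Fin d) (Fin d) ℂ) : Matrix (Fin d) (Fin d) ℂ :=
  ∫ t : ℝ, g t • (mexp ((Complex.I * t) • H) * A * mexp ((-(Complex.I * t)) • H))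

/-- Fourier transform `f̂(ω) = ∫ f(t) e^{-iωt} dt`. -/
noncomputable def fourierT (f : ℝ → ℂ) (ω : ℝ) : ℂ :=
  ∫ t : ℝ, f t * Complex.exp (-(Complex.I * ω * t))

/-!
In an eigenbasis of `H`, with eigenvalues `λ`, the `(j, k)` entry of `A_g` is
`ĝ(λ_k - λ_j) A_{jk}`, and conjugation by `e^{sH}` multiplies it by `e^{-(λ_k - λ_j) s}`.
The identity therefore reduces to the scalar identity `(f̃)^(ω) = f̂(ω) e^{-ωs}`, which is
Fourier inversion: since `γ > |s|`, the decay of `f̂` makes `f̂(ω) e^{-ωs}` integrable, and `f̃`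
is its inverse transform. The norm bound holds because `e^{iHt}` is unitary.
-/

open scoped FourierTransform
open Set

noncomputable def invFourierT (g : ℝ → ℂ) (t : ℝ) : ℂ :=
  ((1 / (2 * π) : ℝ) : ℂ) * ∫ ω : ℝ, g ω * Complex.exp (Complex.I * ω * t)

lemma integrable_exp_neg_mul_abs {b : ℝ} (hb : 0 < b) :
    Integrable fun x : ℝ => Real.exp (-b * |x|) := by
  have hIoi : IntegrableOn (fun x : ℝ => Real.exp (-b * |x|)) (Ioi 0) :=
    (exp_neg_integrableOn_Ioi 0 hb).congr_fun (fun x hx => by rw [abs_of_pos hx])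
      measurableSet_Ioi
  have hIic : IntegrableOn (fun x : ℝ => Real.exp (-b * |x|)) (Iic 0) := by
    have hIci : IntegrableOn (fun x : ℝ => Real.exp (-b * |x|)) (Ici (-0)) := by
      rw [neg_zero]; exact (integrableOn_Ici_iff_integrableOn_Ioi).mpr hIoi
    simpa only [abs_neg] using hIci.comp_neg_Iic
  simpa using hIic.union hIoi

lemma fourierT_eq_fourier (f : ℝ → ℂ) (ω : ℝ) : fourierT f ω = 𝓕 f (ω / (2 * π)) := by
  rw [fourierT, Real.fourier_real_eq_integral_exp_smul]
  congr 1 with t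
  rw [smul_eq_mul, mul_comm]
  congr 2
  push_cast
  field_simp

lemma continuous_fourierT {f : ℝ → ℂ} (hf : Integrable f) : Continuous (fourierT f) := by
  have : Continuous (𝓕 f) :=
    VectorFourier.fourierIntegral_continuous Real.continuous_fourierChar continuous_inner hf
  simp_rw [funext (fourierT_eq_fourier f)]
  fun_prop

lemma fourierInv_eq_invFourierT (g : ℝ → ℂ) (u : ℝ) :
    𝓕⁻ g u = (2 * π : ℂ) * invFourierT g (2 * π * u) := by
  rw [invFourierT, ← mul_assoc, Complex.ofReal_div, Complex.ofReal_one, Complex.ofReal_mul,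
    Complex.ofReal_ofNat, mul_one_div_cancel (by exact_mod_cast two_pi_pos.ne'), one_mul,
    Real.fourierInv_eq_fourier_neg, Real.fourier_real_eq_integral_exp_smul]
  congr 1 with ω
  rw [smul_eq_mul, mul_comm]
  push_cast
  ring_nf

lemma fourierT_invFourierT {g : ℝ → ℂ} (hgc : Continuous g) (hgi : Integrable g)
    (hint : Integrable (invFourierT g)) : fourierT (invFourierT g) = g := by
  have h2π : (2 * π : ℝ) ≠ 0 := two_pi_pos.ne'
  have hinv : Integrable (𝓕⁻ g) := by
    simp_rw [funext (fourierInv_eq_invFourierT g)]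
    exact (hint.comp_mul_left' h2π).const_mul _
  have hfourier : Integrable (𝓕 g) := by
    simpa [Real.fourierInv_eq_fourier_neg] using hinv.comp_neg
  funext ω
  set h : ℝ → ℂ := fun t => invFourierT g t * Complex.exp (-(Complex.I * ω * t))
  calc fourierT (invFourierT g) ω = ∫ t, h t := rfl
    _ = ((2 * π : ℝ) : ℂ) * ∫ u, h (2 * π * u) := by
        rw [Measure.integral_comp_mul_left, abs_of_pos (inv_pos.mpr two_pi_pos), Complex.real_smul,
          ← mul_assoc, ← Complex.ofReal_mul, mul_inv_cancel₀ h2π, Complex.ofReal_one, one_mul]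
    _ = ∫ u, Complex.exp (↑(-2 * π * u * ω) * Complex.I) • 𝓕⁻ g u := by
        rw [← integral_const_mul]
        congr 1 with u
        rw [fourierInv_eq_invFourierT, smul_eq_mul]
        simp only [h]
        push_cast
        ring_nf
    _ = g ω := by
        rw [← Real.fourier_real_eq_integral_exp_smul, hgc.fourier_fourierInv_eq hgi hfourier]

lemma integrable_mul_exp_of_norm_le_exp_neg_abs {φ : ℝ → ℂ} (hφ : AEStronglyMeasurable φ)
    {C γ s : ℝ} (hγs : |s| < γ) (hbound : ∀ ω, ‖φ ω‖ ≤ C * Real.exp (-γ * |ω|)) :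
    Integrable fun ω : ℝ => φ ω * Complex.exp ((-(ω * s) : ℝ) : ℂ) := by
  refine Integrable.mono' ((integrable_exp_neg_mul_abs (sub_pos.mpr hγs)).const_mul C)
    (hφ.mul (by fun_prop : Continuous _).aestronglyMeasurable) (ae_of_all _ fun ω => ?_)
  have hexp : Real.exp (-(ω * s)) ≤ Real.exp (|s| * |ω|) :=
    Real.exp_le_exp.mpr ((neg_le_abs _).trans_eq (by rw [abs_mul, mul_comm]))
  calc ‖φ ω * Complex.exp ((-(ω * s) : ℝ) : ℂ)‖
      = ‖φ ω‖ * Real.exp (-(ω * s)) := by rw [norm_mul, Complex.norm_exp_ofReal]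
    _ ≤ C * Real.exp (-γ * |ω|) * Real.exp (|s| * |ω|) :=
        mul_le_mul (hbound ω) hexp (Real.exp_pos _).le ((norm_nonneg _).trans (hbound ω))
    _ = C * Real.exp (-(γ - |s|) * |ω|) := by rw [mul_assoc, ← Real.exp_add]; ring_nf

lemma fourierT_invFourierT_mul_exp {f : ℝ → ℂ} (hf : Integrable f) {C γ s : ℝ} (hγs : |s| < γ)
    (hfhat : ∀ ω, ‖fourierT f ω‖ ≤ C * Real.exp (-γ * |ω|))
    (hint : Integrable (invFourierT fun ω => fourierT f ω * Complex.exp ((-(ω * s) : ℝ) : ℂ))) :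
    fourierT (invFourierT fun ω => fourierT f ω * Complex.exp ((-(ω * s) : ℝ) : ℂ))
      = fun ω => fourierT f ω * Complex.exp ((-(ω * s) : ℝ) : ℂ) :=
  fourierT_invFourierT ((continuous_fourierT hf).mul (by fun_prop))
    (integrable_mul_exp_of_norm_le_exp_neg_abs (continuous_fourierT hf).aestronglyMeasurable
      hγs hfhat) hint

namespace Matrix.IsHermitian

variable {d : ℕ} {H : Matrix (Fin d) (Fin d) ℂ}

lemma I_mul_smul_mem_skewAdjoint (hH : H.IsHermitian) (t : ℝ) :
    (Complex.I * t) • H ∈ skewAdjoint (Matrix (Fin d) (Fin d) ℂ) :=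
  IsSelfAdjoint.smul_mem_skewAdjoint (by simp [skewAdjoint.mem_iff]) hH.isSelfAdjoint

lemma mexp_I_mul_smul_mem_unitary (hH : H.IsHermitian) (t : ℝ) :
    mexp ((Complex.I * t) • H) ∈ unitary (Matrix (Fin d) (Fin d) ℂ) :=
  -- the general lemmas on `NormedSpace.exp` ask for a normed `ℚ`-algebra structure
  letI : NormedAlgebra ℚ (Matrix (Fin d) (Fin d) ℂ) := .restrictScalars ℚ ℂ _
  NormedSpace.exp_mem_unitary_of_mem_skewAdjoint (hH.I_mul_smul_mem_skewAdjoint t)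

lemma star_mexp_I_mul_smul (hH : H.IsHermitian) (t : ℝ) :
    star (mexp ((Complex.I * t) • H)) = mexp ((-(Complex.I * t)) • H) := by
  rw [mexp, mexp, NormedSpace.star_exp,
    skewAdjoint.mem_iff.mp (hH.I_mul_smul_mem_skewAdjoint t), neg_smul]

lemma norm_mexp_conj (hH : H.IsHermitian) (A : Matrix (Fin d) (Fin d) ℂ) (t : ℝ) :
    ‖mexp ((Complex.I * t) • H) * A * mexp ((-(Complex.I * t)) • H)‖ = ‖A‖ := by
  have hu := hH.mexp_I_mul_smul_mem_unitary t
  rw [← hH.star_mexp_I_mul_smul, CStarRing.norm_mul_mem_unitary _ (Unitary.star_mem hu),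
    CStarRing.norm_mem_unitary_mul _ hu]

lemma continuous_mexp_smul {X : Type*} [TopologicalSpace X] (c : X → ℂ) (hc : Continuous c) :
    Continuous fun t => mexp (c t • H) :=
  letI : NormedAlgebra ℚ (Matrix (Fin d) (Fin d) ℂ) := .restrictScalars ℚ ℂ _
  NormedSpace.exp_continuous.comp (hc.smul continuous_const)

lemma integrable_filtered_integrand (hH : H.IsHermitian) (A : Matrix (Fin d) (Fin d) ℂ)
    {g : ℝ → ℂ} (hg : Integrable g) :
    Integrable fun t : ℝ =>
      g t • (mexp ((Complex.I * t) • H) * A * mexp ((-(Complex.I * t)) • H)) := by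
  refine Integrable.mono' (hg.norm.mul_const ‖A‖) (hg.aestronglyMeasurable.smul ?_)
    (ae_of_all _ fun t => by rw [norm_smul, hH.norm_mexp_conj])
  exact (((continuous_mexp_smul _ (by fun_prop)).mul continuous_const).mul
    (continuous_mexp_smul _ (by fun_prop))).aestronglyMeasurable

lemma norm_filtered_le (hH : H.IsHermitian) (A : Matrix (Fin d) (Fin d) ℂ) {g : ℝ → ℂ}
    (hg : Integrable g) : ‖filtered H g A‖ ≤ ‖A‖ * ∫ t, ‖g t‖ := by
  rw [filtered, ← integral_const_mul]
  refine norm_integral_le_of_norm_le (hg.norm.const_mul _) (ae_of_all _ fun t => ?_)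
  rw [norm_smul, hH.norm_mexp_conj, mul_comm]

variable (hH : H.IsHermitian)

local notation "U" => (hH.eigenvectorUnitary : Matrix (Fin d) (Fin d) ℂ)

lemma mexp_smul (z : ℂ) :
    mexp (z • H) = U * diagonal (fun i => Complex.exp (z * hH.eigenvalues i)) * star U := by
  set V : (Matrix (Fin d) (Fin d) ℂ)ˣ := Unitary.toUnits hH.eigenvectorUnitary
  have hzH : z • H = (V : Matrix (Fin d) (Fin d) ℂ) *
      diagonal (fun i => z * (hH.eigenvalues i : ℂ)) * ((V⁻¹ : (Matrix (Fin d) (Fin d) ℂ)ˣ) :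
        Matrix (Fin d) (Fin d) ℂ) := by
    conv_lhs => rw [hH.spectral_theorem, Unitary.conjStarAlgAut_apply]
    rw [← smul_mul_assoc, ← mul_smul_comm, ← diagonal_smul]
    rfl
  rw [mexp, hzH, Matrix.exp_units_conj, Matrix.exp_diagonal]
  simp only [Pi.exp_def, ← Complex.exp_eq_exp_ℂ]
  rfl

lemma conj_mexp_mul_mul_mexp_apply (z w : ℂ) (X : Matrix (Fin d) (Fin d) ℂ) (j k : Fin d) :
    (star U * (mexp (z • H) * X * mexp (w • H)) * U) j k
      = Complex.exp (z * hH.eigenvalues j + w * hH.eigenvalues k) * (star U * X * U) j k := by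
  have hU : star U * U = 1 := Unitary.coe_star_mul_self _
  rw [hH.mexp_smul z, hH.mexp_smul w]
  simp only [← mul_assoc, hU, one_mul]
  rw [mul_assoc _ (star U) U, hU, mul_one, mul_diagonal]
  simp only [mul_assoc (diagonal _), diagonal_mul, Complex.exp_add]
  ring

lemma conj_filtered_apply (A : Matrix (Fin d) (Fin d) ℂ) {g : ℝ → ℂ} (hg : Integrable g)
    (j k : Fin d) :
    (star U * filtered H g A * U) j k
      = fourierT g (hH.eigenvalues k - hH.eigenvalues j) * (star U * A * U) j k := by
  let L : Matrix (Fin d) (Fin d) ℂ →L[ℂ] ℂ := LinearMap.toContinuousLinearMap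
    (entryLinearMap ℂ ℂ j k ∘ₗ LinearMap.mulLeftRight ℂ (star U, U))
  have hL : ∀ X, L X = (star U * X * U) j k := fun X => rfl
  rw [← hL, filtered, ← L.integral_comp_comm (hH.integrable_filtered_integrand A hg), fourierT,
    ← integral_mul_const]
  congr 1 with t
  rw [map_smul, hL, hH.conj_mexp_mul_mul_mexp_apply, smul_eq_mul]
  push_cast
  ring_nf

end Matrix.IsHermitian

theorem smoothed_observable_imaginary_time_general
    {d : ℕ} (H A : Matrix (Fin d) (Fin d) ℂ) (hH : H.IsHermitian)
    (s : ℝ) (f : ℝ → ℂ) (hfi : Integrable f)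
    (C γ : ℝ) (hγs : |s| < γ)
    (hfhat : ∀ ω : ℝ, ‖fourierT f ω‖ ≤ C * Real.exp (-γ * |ω|))
    (ftilde : ℝ → ℂ)
    (hft : ∀ t : ℝ, ftilde t
      = (1 / (2 * π) : ℝ) *
        ∫ ω : ℝ, fourierT f ω * Complex.exp (((-(ω * s) : ℝ) : ℂ) + Complex.I * ω * t))
    (hfti : Integrable ftilde) :
    mexp ((s : ℂ) • H) * filtered H f A * mexp ((-(s : ℂ)) • H) = filtered H ftilde A ∧
      ‖filtered H ftilde A‖ ≤ ‖A‖ * ∫ t : ℝ, ‖ftilde t‖ := by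
  obtain rfl : ftilde = invFourierT fun ω => fourierT f ω * Complex.exp ((-(ω * s) : ℝ) : ℂ) :=
    funext fun t => by simp only [hft, invFourierT, Complex.exp_add, mul_assoc]
  have hhat := fourierT_invFourierT_mul_exp hfi hγs hfhat hfti
  refine ⟨?_, hH.norm_filtered_le A hfti⟩
  refine EquivLike.injective (Unitary.conjStarAlgAut ℂ _ (star hH.eigenvectorUnitary)) ?_
  simp only [Unitary.conjStarAlgAut_apply, Unitary.coe_star, star_star]
  ext j k
  rw [hH.conj_mexp_mul_mul_mexp_apply, hH.conj_filtered_apply A hfi,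
    hH.conj_filtered_apply A hfti, hhat]
  push_cast
  ring_nf

/-- imaginary-time conjugation of a filtered operator is again a filtered
operator, with filter given by the shifted Fourier transform, together with the norm bound. -/
theorem smoothed_observable_imaginary_time
    {d : ℕ} (hd : 1 ≤ d) (H A : Matrix (Fin d) (Fin d) ℂ) (hH : H.IsHermitian)
    (s : ℝ) (f : ℝ → ℂ) (hfc : Continuous f) (hfi : Integrable f)
    (C γ : ℝ) (hC : 0 < C) (hγs : |s| < γ)
    (hfhat : ∀ ω : ℝ, ‖fourierT f ω‖ ≤ C * Real.exp (-γ * |ω|))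
    (ftilde : ℝ → ℂ)
    (hft : ∀ t : ℝ, ftilde t
      = (1 / (2 * π) : ℝ) *
        ∫ ω : ℝ, fourierT f ω * Complex.exp (((-(ω * s) : ℝ) : ℂ) + Complex.I * ω * t))
    (hfti : Integrable ftilde) (hftc : Continuous ftilde) :
    mexp ((s : ℂ) • H) * filtered H f A * mexp ((-(s : ℂ)) • H) = filtered H ftilde A ∧
      ‖filtered H ftilde A‖ ≤ ‖A‖ * ∫ t : ℝ, ‖ftilde t‖ :=
  smoothed_observable_imaginary_time_general H A hH s f hfi C γ hγs hfhat ftilde hft hfti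
end

section
/- Let σ be a positive definite d×d complex matrix and K₁, K₂ d×d complex matrices satisfying K₂ = σ^{1/2} K₁† σ^{−1/2}. Then the completely positive map T′(ρ) = K₁ ρ K₁† + K₂ ρ K₂† satisfies KMS detailed balance with respect to σ, i.e. for all d×d matrices X, Y one has ⟨X, T′†(Y)⟩_{σ,1/2} = ⟨T′†(X), Y⟩_{σ,1/2}, where T′†(X) = K₁† X K₁ + K₂† X K₂. -/
open scoped Matrix.Norms.L2Operator ComplexOrder Classical
open Matrix

noncomputable def Matrix.PosSemidef.sqrt {n : Type*} [Fintype n] [DecidableEq n]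
    {A : Matrix n n ℂ} (hA : A.PosSemidef) : Matrix n n ℂ :=
  hA.1.eigenvectorUnitary.1 * diagonal ((↑) ∘ (√·) ∘ hA.1.eigenvalues) *
    (star hA.1.eigenvectorUnitary : Matrix n n ℂ)

/-- Positive semidefinite square root (extended by `0` off the PSD matrices). -/
noncomputable def psdSqrt {d : ℕ} (A : Matrix (Fin d) (Fin d) ℂ) : Matrix (Fin d) (Fin d) ℂ :=
  if h : A.PosSemidef then h.sqrt else 0

/-- The KMS inner product `⟨X, Y⟩_{σ,1/2} = Tr(Xᴴ σ^{1/2} Y σ^{1/2})`, expressed in terms of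
`s = σ^{1/2}`. -/
noncomputable def kmsInner {d : ℕ} (s X Y : Matrix (Fin d) (Fin d) ℂ) : ℂ :=
  (Xᴴ * s * Y * s).trace

/-!
With `s = σ^{1/2}` Hermitian and invertible, the relation `K₂ = s K₁ᴴ s⁻¹` is symmetric in
`K₁, K₂`, and it says exactly that `X ↦ K₂ᴴ X K₂` is the KMS adjoint of `X ↦ K₁ᴴ X K₁`: after
substituting `K₂`, the inner `s⁻¹ s` cancels and cyclicity of the trace does the rest. Summing the
two instances of this adjointness gives detailed balance for `T'†`.
-/

namespace Matrix.PosSemidef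

variable {n : Type*} [Fintype n] [DecidableEq n] {A : Matrix n n ℂ}

theorem isHermitian_sqrt (hA : A.PosSemidef) : hA.sqrt.IsHermitian :=
  isHermitian_mul_mul_conjTranspose _ <| isHermitian_diagonal_of_self_adjoint _ <| by
    ext i; simp

theorem sqrt_mul_self (hA : A.PosSemidef) : hA.sqrt * hA.sqrt = A := by
  set U : Matrix n n ℂ := hA.1.eigenvectorUnitary.1
  set D : Matrix n n ℂ := diagonal ((↑) ∘ (√·) ∘ hA.1.eigenvalues)
  have hU : star U * U = 1 := Unitary.coe_star_mul_self _
  have hD : D * D = diagonal (((↑) : ℝ → ℂ) ∘ hA.1.eigenvalues) := by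
    rw [diagonal_mul_diagonal]
    congr 1
    funext i
    simp [← Complex.ofReal_mul, Real.mul_self_sqrt (hA.eigenvalues_nonneg i)]
  calc hA.sqrt * hA.sqrt = U * D * (star U * U) * D * star U := by
        simp only [sqrt, U, D, Matrix.mul_assoc]
    _ = A := by
        rw [hU, Matrix.mul_one, Matrix.mul_assoc U D D, hD]
        exact (hA.1.spectral_theorem.trans (Unitary.conjStarAlgAut_apply _ _)).symm

end Matrix.PosSemidef

section KMS

variable {d : ℕ}

theorem psdSqrt_eq_sqrt {σ : Matrix (Fin d) (Fin d) ℂ} (hσ : σ.PosSemidef) :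
    psdSqrt σ = hσ.sqrt :=
  dif_pos hσ

theorem isHermitian_psdSqrt {σ : Matrix (Fin d) (Fin d) ℂ} (hσ : σ.PosSemidef) :
    (psdSqrt σ).IsHermitian := by
  rw [psdSqrt_eq_sqrt hσ]
  exact hσ.isHermitian_sqrt

theorem isUnit_det_psdSqrt {σ : Matrix (Fin d) (Fin d) ℂ} (hσ : σ.PosDef) :
    IsUnit (psdSqrt σ).det := by
  have h : IsUnit (psdSqrt σ * psdSqrt σ).det := by
    rw [psdSqrt_eq_sqrt hσ.posSemidef, hσ.posSemidef.sqrt_mul_self]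
    exact isUnit_iff_ne_zero.mpr hσ.det_pos.ne'
  rw [det_mul] at h
  exact isUnit_of_mul_isUnit_left h

theorem kmsInner_add_left (s X₁ X₂ Y : Matrix (Fin d) (Fin d) ℂ) :
    kmsInner s (X₁ + X₂) Y = kmsInner s X₁ Y + kmsInner s X₂ Y := by
  simp only [kmsInner, conjTranspose_add, Matrix.add_mul, trace_add]

theorem kmsInner_add_right (s X Y₁ Y₂ : Matrix (Fin d) (Fin d) ℂ) :
    kmsInner s X (Y₁ + Y₂) = kmsInner s X Y₁ + kmsInner s X Y₂ := by
  simp only [kmsInner, Matrix.mul_add, Matrix.add_mul, trace_add]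

variable {s L₁ L₂ : Matrix (Fin d) (Fin d) ℂ}

theorem eq_mul_conjTranspose_mul_inv_symm (hs : s.IsHermitian) (hs_det : IsUnit s.det)
    (hL : L₂ = s * L₁ᴴ * s⁻¹) : L₁ = s * L₂ᴴ * s⁻¹ := by
  rw [hL, conjTranspose_mul, conjTranspose_mul, conjTranspose_nonsing_inv, hs.eq,
    conjTranspose_conjTranspose, mul_nonsing_inv_cancel_left _ _ hs_det,
    mul_nonsing_inv_cancel_right _ _ hs_det]

theorem kmsInner_conjTranspose_mul_mul (hs : s.IsHermitian) (hs_det : IsUnit s.det)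
    (hL : L₂ = s * L₁ᴴ * s⁻¹) (X Y : Matrix (Fin d) (Fin d) ℂ) :
    kmsInner s X (L₁ᴴ * Y * L₁) = kmsInner s (L₂ᴴ * X * L₂) Y := by
  have hL₂ : L₂ᴴ = s⁻¹ * L₁ * s := by
    rw [hL, conjTranspose_mul, conjTranspose_mul, conjTranspose_nonsing_inv, hs.eq,
      conjTranspose_conjTranspose, Matrix.mul_assoc]
  calc kmsInner s X (L₁ᴴ * Y * L₁) = (L₁ * s * Xᴴ * s * L₁ᴴ * Y).trace := by
        simpa only [kmsInner, Matrix.mul_assoc] using trace_mul_comm (Xᴴ * s * L₁ᴴ * Y) (L₁ * s)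
    _ = (s⁻¹ * (L₁ * s * Xᴴ * s * L₁ᴴ * Y * s)).trace := by
        rw [trace_mul_comm s⁻¹, Matrix.mul_assoc _ s s⁻¹, mul_nonsing_inv _ hs_det, Matrix.mul_one]
    _ = kmsInner s (L₂ᴴ * X * L₂) Y := by
        rw [kmsInner, conjTranspose_mul, conjTranspose_mul, conjTranspose_conjTranspose, hL₂, hL]
        simp only [Matrix.mul_assoc, nonsing_inv_mul_cancel_left _ _ hs_det]

end KMS

/-- if `K₂ = σ^{1/2} K₁ᴴ σ^{-1/2}` then the completely positive map
`T'(ρ) = K₁ρK₁ᴴ + K₂ρK₂ᴴ`, whose Hilbert–Schmidt adjoint is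
`T'†(X) = K₁ᴴXK₁ + K₂ᴴXK₂`, satisfies KMS detailed balance with respect to `σ`. -/
theorem kraus_pair_detailed_balance
    {d : ℕ} (σ K₁ K₂ : Matrix (Fin d) (Fin d) ℂ) (hσ : σ.PosDef)
    (hK₂ : K₂ = psdSqrt σ * K₁ᴴ * (psdSqrt σ)⁻¹) :
    ∀ X Y : Matrix (Fin d) (Fin d) ℂ,
      kmsInner (psdSqrt σ) X (K₁ᴴ * Y * K₁ + K₂ᴴ * Y * K₂)
        = kmsInner (psdSqrt σ) (K₁ᴴ * X * K₁ + K₂ᴴ * X * K₂) Y := by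
  intro X Y
  have hs := isHermitian_psdSqrt hσ.posSemidef
  have hs_det := isUnit_det_psdSqrt hσ
  have hK₁ := eq_mul_conjTranspose_mul_inv_symm hs hs_det hK₂
  rw [kmsInner_add_left, kmsInner_add_right, kmsInner_conjTranspose_mul_mul hs hs_det hK₂,
    kmsInner_conjTranspose_mul_mul hs hs_det hK₁, add_comm]
end

section
/- Let m : ℝ → ℂ be twice continuously differentiable with m, m′, m″ all integrable on ℝ, and define η(t) := (1/2π) ∫_ℝ m(ν) e^{iνt} dν. Then η is integrable and ∫_ℝ |η(t)| dt ≤ (1/π) ( ∫_ℝ |m(ν)| dν + ∫_ℝ |m″(ν)| dν ). -/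
/-!
Up to the factor `1 / (2π)`, `η(t)` is the Fourier transform `𝓕 m` at `-t / (2π)`. Hence
`|η(t)| ≤ (1 / 2π) ∫ |m|`, and since `𝓕 m″ (ξ) = (2πiξ)² 𝓕 m (ξ)` also
`t² |η(t)| ≤ (1 / 2π) ∫ |m″|`. Integrating the first bound over `[-1, 1]` and the second,
divided by `t²`, over `|t| > 1` gives the estimate, as `∫_{|t| > 1} t⁻² = 2`.
-/

open MeasureTheory Real FourierTransform Set

theorem integrableOn_inv_sq_compl_Icc :
    IntegrableOn (fun t : ℝ => (t ^ 2)⁻¹) (Icc (-1) 1)ᶜ := by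
  refine (integrable_inv_one_add_sq.const_mul 2).integrableOn.mono'
    (by fun_prop : Measurable fun t : ℝ => (t ^ 2)⁻¹).aestronglyMeasurable ?_
  refine (ae_restrict_iff' measurableSet_Icc.compl).2 (.of_forall fun t ht => ?_)
  have ht : 1 < t ^ 2 := by
    rw [mem_compl_iff, mem_Icc, ← abs_le, not_le] at ht
    simpa using one_lt_sq_iff_one_lt_abs t |>.2 ht
  rw [norm_inv, norm_pow, norm_eq_abs, sq_abs, ← div_eq_mul_inv, le_div_iff₀ (by positivity)]
  calc (t ^ 2)⁻¹ * (1 + t ^ 2) = (t ^ 2)⁻¹ + 1 := by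
        rw [mul_add, mul_one, inv_mul_cancel₀ (zero_lt_one.trans ht).ne', add_comm]
    _ ≤ 2 := by linarith [inv_lt_one_of_one_lt₀ ht]

theorem integral_inv_sq_compl_Icc : ∫ t in (Icc (-1 : ℝ) 1)ᶜ, (t ^ 2)⁻¹ = 2 := by
  have h_abs (t : ℝ) : (Icc (-1) 1)ᶜ.indicator (fun t => (t ^ 2)⁻¹) t
      = (Ioi 1).indicator (fun s => s ^ (-2 : ℝ)) |t| := by
    simp only [indicator, mem_compl_iff, mem_Icc, ← abs_le, mem_Ioi, not_le]
    split_ifs with h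
    · rw [rpow_neg (abs_nonneg t), rpow_two, sq_abs]
    · rfl
  rw [← integral_indicator measurableSet_Icc.compl, funext h_abs, integral_comp_abs,
    setIntegral_indicator measurableSet_Ioi, Ioi_inter_Ioi, max_eq_right zero_le_one,
    integral_Ioi_rpow_of_lt (by norm_num) one_pos]
  norm_num

section DecayBounds

variable {E : Type*} [NormedAddCommGroup E] {g : ℝ → E} {A B : ℝ}

theorem integrable_of_norm_le_of_sq_mul_norm_le (hg : AEStronglyMeasurable g)
    (hA : ∀ t, ‖g t‖ ≤ A) (hB : ∀ t, t ^ 2 * ‖g t‖ ≤ B) : Integrable g := by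
  -- `(1 + t²) ‖g t‖ ≤ A + B`
  refine (integrable_inv_one_add_sq.const_mul (A + B)).mono' hg (.of_forall fun t => ?_)
  rw [← div_eq_mul_inv, le_div_iff₀ (by positivity)]
  linarith [hA t, hB t]

theorem integral_norm_le_of_sq_mul_norm_le (hg : AEStronglyMeasurable g)
    (hA : ∀ t, ‖g t‖ ≤ A) (hB : ∀ t, t ^ 2 * ‖g t‖ ≤ B) :
    ∫ t, ‖g t‖ ≤ 2 * (A + B) := by
  have hint := (integrable_of_norm_le_of_sq_mul_norm_le hg hA hB).norm
  have h_near : ∫ t in Icc (-1 : ℝ) 1, ‖g t‖ ≤ 2 * A :=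
    calc ∫ t in Icc (-1 : ℝ) 1, ‖g t‖ ≤ ∫ _ in Icc (-1 : ℝ) 1, A :=
          setIntegral_mono_on hint.integrableOn (integrableOn_const measure_Icc_lt_top.ne)
            measurableSet_Icc fun t _ => hA t
      _ = 2 * A := by
        rw [setIntegral_const, Real.volume_real_Icc_of_le (by norm_num), smul_eq_mul]; norm_num
  have h_far : ∫ t in (Icc (-1 : ℝ) 1)ᶜ, ‖g t‖ ≤ 2 * B := by
    calc ∫ t in (Icc (-1 : ℝ) 1)ᶜ, ‖g t‖
        ≤ ∫ t in (Icc (-1 : ℝ) 1)ᶜ, B * (t ^ 2)⁻¹ := by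
          refine setIntegral_mono_on hint.integrableOn
            (integrableOn_inv_sq_compl_Icc.const_mul B) measurableSet_Icc.compl fun t ht => ?_
          have ht : t ≠ 0 := by rintro rfl; exact ht ⟨by norm_num, by norm_num⟩
          rw [le_mul_inv_iff₀ (by positivity), mul_comm]
          exact hB t
      _ = 2 * B := by rw [integral_const_mul, integral_inv_sq_compl_Icc, mul_comm]
  rw [← integral_add_compl measurableSet_Icc hint]
  linarith

end DecayBounds

theorem sq_mul_norm_fourier_le {E : Type*} [NormedAddCommGroup E] [NormedSpace ℂ E]
    {f : ℝ → E} (hf : ContDiff ℝ 2 f) (hfi : Integrable f) (hfi' : Integrable (deriv f))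
    (hfi'' : Integrable (deriv (deriv f))) (ξ : ℝ) :
    (2 * π * ξ) ^ 2 * ‖𝓕 f ξ‖ ≤ ∫ x, ‖deriv (deriv f) x‖ := by
  have hd : Differentiable ℝ f := hf.differentiable (by norm_num)
  have hd' : Differentiable ℝ (deriv f) := by
    rw [show (2 : WithTop ℕ∞) = 1 + 1 from rfl, contDiff_succ_iff_deriv] at hf
    exact hf.2.2.differentiable one_ne_zero
  have h : ‖𝓕 (deriv (deriv f)) ξ‖ ≤ ∫ x, ‖deriv (deriv f) x‖ :=
    VectorFourier.norm_fourierIntegral_le_integral_norm _ _ _ _ _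
  rw [Real.fourier_deriv hfi' hd' hfi'', Real.fourier_deriv hfi hd hfi'] at h
  calc (2 * π * ξ) ^ 2 * ‖𝓕 f ξ‖ = 2 * π * |ξ| * (2 * π * |ξ| * ‖𝓕 f ξ‖) := by
        rw [mul_pow, ← sq_abs ξ]; ring
    _ ≤ ∫ x, ‖deriv (deriv f) x‖ := by simpa [norm_smul, abs_of_pos pi_pos] using h

theorem integral_mul_exp_eq_fourier (m : ℝ → ℂ) (t : ℝ) :
    ∫ ν : ℝ, m ν * Complex.exp (Complex.I * ν * t) = 𝓕 m (-(t / (2 * π))) := by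
  rw [Real.fourier_real_eq_integral_exp_smul]
  congr 1 with ν
  rw [smul_eq_mul, mul_comm]
  congr 2
  push_cast
  field_simp

/-- Fourier `L¹` estimate: if `m` is twice continuously differentiable with
`m`, `m′`, `m″` integrable, then `η(t) = (1/2π) ∫ m(ν) e^{iνt} dν` is integrable and
`∫ |η| ≤ (1/π)(∫ |m| + ∫ |m″|)`. -/
theorem fourier_L1_estimate
    (m : ℝ → ℂ) (hm : ContDiff ℝ 2 m)
    (hmi : Integrable m) (hmi' : Integrable (deriv m)) (hmi'' : Integrable (deriv (deriv m))) :
    Integrable (fun t : ℝ => (1 / (2 * π) : ℝ) * ∫ ν : ℝ, m ν * Complex.exp (Complex.I * ν * t)) ∧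
      (∫ t : ℝ, ‖(1 / (2 * π) : ℝ) * ∫ ν : ℝ, m ν * Complex.exp (Complex.I * ν * t)‖)
        ≤ (1 / π) * ((∫ ν : ℝ, ‖m ν‖) + ∫ ν : ℝ, ‖deriv (deriv m) ν‖) := by
  simp_rw [integral_mul_exp_eq_fourier]
  set F : ℝ → ℂ := fun t => 𝓕 m (-(t / (2 * π)))
  have hF_meas : AEStronglyMeasurable F :=
    ((VectorFourier.fourierIntegral_continuous continuous_fourierChar continuous_inner
      hmi).comp (by fun_prop)).aestronglyMeasurable
  have hF_bdd (t : ℝ) : ‖F t‖ ≤ ∫ ν, ‖m ν‖ :=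
    VectorFourier.norm_fourierIntegral_le_integral_norm _ _ _ _ _
  have hF_decay (t : ℝ) : t ^ 2 * ‖F t‖ ≤ ∫ ν, ‖deriv (deriv m) ν‖ := by
    convert sq_mul_norm_fourier_le hm hmi hmi' hmi'' (-(t / (2 * π))) using 2
    field_simp
  refine ⟨(integrable_of_norm_le_of_sq_mul_norm_le hF_meas hF_bdd hF_decay).const_mul _, ?_⟩
  have hc : 0 < 1 / (2 * π) := by positivity
  simp only [norm_mul, Complex.norm_real, norm_eq_abs, abs_of_pos hc, integral_const_mul]
  calc 1 / (2 * π) * ∫ t, ‖F t‖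
      ≤ 1 / (2 * π) * (2 * ((∫ ν, ‖m ν‖) + ∫ ν, ‖deriv (deriv m) ν‖)) := by
        gcongr
        exact integral_norm_le_of_sq_mul_norm_le hF_meas hF_bdd hF_decay
    _ = _ := by field_simp
end
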